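/- arXiv:0901.3897 — 3 statements merged into one kernel-verified Lean document; each statement's English description precedes it below -/
import Mathlib

section
/- Let G be a finite simple graph that is a domain, and let H_1 and H_2 be two distinct connected components of G^{0-1}, with vertex bipartitions A_1 ∪ B_1 and A_2 ∪ B_2 respectively. If G contains an edge between some vertex of A_1 and some vertex of A_2, then every vertex of A_1 is adjacent in G to every vertex of A_2. -/
variable {V : Type*} [Fintype V] [DecidableEq V]

/-- For `k ∈ ℕ`, a `k`-cover of `G` is a function from the vertices of `G` to `ℕ` that is
not identically zero and whose values at the two endpoints of any edge sum to at least `k`. -/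
def IsCover (G : SimpleGraph V) (k : ℕ) (a : V → ℕ) : Prop :=
  a ≠ 0 ∧ ∀ i j : V, G.Adj i j → k ≤ a i + a j

/-- A `k`-cover is basic if it is not the pointwise sum of a `k`-cover and a `0`-cover. -/
def IsBasicCover (G : SimpleGraph V) (k : ℕ) (a : V → ℕ) : Prop :=
  IsCover G k a ∧ ¬ ∃ b c : V → ℕ, IsCover G k b ∧ IsCover G 0 c ∧ a = b + c

/-- `G` is a domain if for all `s, t` with `s + t ≥ 1`, the pointwise sum of any `s` basic
`1`-covers and any `t` basic `2`-covers of `G` is a basic `(s + 2t)`-cover. -/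
def IsGraphDomain (G : SimpleGraph V) : Prop :=
  ∀ s t : ℕ, 1 ≤ s + t → ∀ f : Fin s → V → ℕ, ∀ g : Fin t → V → ℕ,
    (∀ p, IsBasicCover G 1 (f p)) → (∀ q, IsBasicCover G 2 (g q)) →
    IsBasicCover G (s + 2 * t) ((∑ p, f p) + (∑ q, g q))

/-- `G` is unmixed if all basic `1`-covers of `G` have the same norm. -/
def IsUnmixed (G : SimpleGraph V) : Prop :=
  ∀ a b : V → ℕ, IsBasicCover G 1 a → IsBasicCover G 1 b → ∑ v, a v = ∑ v, b v

/-- `G` satisfies WSC if it has at least one edge and every non-isolated vertex `i` has a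
neighbour `j` such that any neighbour of `i` is adjacent to any neighbour of `j`. -/
def SatisfiesWSC (G : SimpleGraph V) : Prop :=
  (∃ i j : V, G.Adj i j) ∧
    ∀ i : V, (∃ x, G.Adj i x) →
      ∃ j : V, G.Adj i j ∧ ∀ i' j' : V, G.Adj i i' → G.Adj j j' → G.Adj i' j'

/-- `G` satisfies SC if for every edge `{i, j}`, every neighbour `i'` of `i` and every
neighbour `j'` of `j`, one has `i' ≠ j'` and `{i', j'}` is an edge. -/
def SatisfiesSC (G : SimpleGraph V) : Prop :=
  ∀ i j i' j' : V, G.Adj i j → G.Adj i i' → G.Adj j j' → i' ≠ j' ∧ G.Adj i' j'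

/-- `G` satisfies MSC if the set of non-isolated vertices of `G` is nonempty and carries a
perfect matching `M` (a matching of `G` whose vertex set is exactly the set of non-isolated
vertices) such that for every edge `{i, j}` of `M`, every neighbour `i'` of `i` in `G` and
every neighbour `j'` of `j` in `G`, `{i', j'}` is an edge of `G`. -/
def SatisfiesMSC (G : SimpleGraph V) : Prop :=
  ∃ M : G.Subgraph, M.verts = {v : V | ∃ w, G.Adj v w} ∧ M.verts.Nonempty ∧
    M.IsMatching ∧
    ∀ i j : V, M.Adj i j → ∀ i' j' : V, G.Adj i i' → G.Adj j j' → G.Adj i' j'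

/-- The graph `G^{0-1}`: its edges are the edges `{i, j}` of `G` such that `a i + a j = 1`
for every basic `1`-cover `a` of `G`.  (Its vertex set is interpreted as the set of
non-isolated vertices of `G`; here it is defined on all of `V`, and the vertices of `G`
that are isolated stay isolated, so they can be excluded explicitly when needed.) -/
def ZeroOne (G : SimpleGraph V) : SimpleGraph V where
  Adj i j := G.Adj i j ∧ ∀ a : V → ℕ, IsBasicCover G 1 a → a i + a j = 1
  symm := by
    constructor
    intro i j h
    exact ⟨h.1.symm, fun a ha => by rw [add_comm]; exact h.2 a ha⟩
  loopless := by
    constructor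
    intro i h
    exact G.loopless.irrefl i h.1

/-- `A ∪ B` is a vertex bipartition of the connected component `C` of `H`, and the edges of
`H` inside `C` are exactly the pairs `{x, y}` with `x ∈ A` and `y ∈ B` (so the component is
a complete bipartite graph on `A ∪ B`). -/
def IsCompBipartition (H : SimpleGraph V) (C : H.ConnectedComponent) (A B : Set V) : Prop :=
  A ∪ B = C.supp ∧ Disjoint A B ∧
    ∀ x ∈ C.supp, ∀ y ∈ C.supp,
      (H.Adj x y ↔ (x ∈ A ∧ y ∈ B) ∨ (x ∈ B ∧ y ∈ A))

/-- The graph `G⁺` obtained from `G` by attaching a pendant vertex to each vertex of `G`: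
`Sum.inl v` is the original vertex `v`, and `Sum.inr v` is the pendant attached to `v`. -/
def GPlus (G : SimpleGraph V) : SimpleGraph (V ⊕ V) where
  Adj x y :=
    match x, y with
    | Sum.inl u, Sum.inl v => G.Adj u v
    | Sum.inl u, Sum.inr v => u = v
    | Sum.inr u, Sum.inl v => u = v
    | Sum.inr _, Sum.inr _ => False
  symm := by
    constructor
    rintro (u | u) (v | v) h
    · exact h.symm
    · exact h.symm
    · exact h.symm
    · exact h.elim
  loopless := by
    constructor
    rintro (u | u) h
    · exact G.loopless.irrefl u h
    · exact h

/-
If `x ∈ A₁` and `y ∈ A₂` were not adjacent, the complement of `{x, y}` would be a vertex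
cover, so some basic `1`-cover `a` vanishes at `x` and at `y`. The edges of `G^{0-1}` force
`a u + a b = 1` for all `u ∈ A`, `b ∈ B` in a complete bipartite component, so `a` is
constant on `A₁` and on `A₂`; hence `a` vanishes at both ends of the given edge between
`A₁` and `A₂`, which is impossible for a `1`-cover.
-/

section Covers

variable {G : SimpleGraph V} {k : ℕ}

omit [DecidableEq V] in
theorem IsCover.exists_isBasicCover_le {a : V → ℕ} (ha : IsCover G k a) :
    ∃ b, IsBasicCover G k b ∧ b ≤ a := by
  induction h : ∑ v, a v using Nat.strong_induction_on generalizing a with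
  | _ n ih =>
    by_cases hbasic : IsBasicCover G k a
    · exact ⟨a, hbasic, le_rfl⟩
    obtain ⟨b, c, hb, hc, rfl⟩ : ∃ b c, IsCover G k b ∧ IsCover G 0 c ∧ a = b + c := by
      simpa [IsBasicCover, ha] using hbasic
    have hc_pos : 0 < ∑ v, c v :=
      Nat.pos_of_ne_zero fun h0 => hc.1 (funext fun v => Finset.sum_eq_zero_iff.1 h0 v (by simp))
    have hlt : ∑ v, b v < n := by
      simp only [← h, Pi.add_apply, Finset.sum_add_distrib]
      omega
    obtain ⟨b', hb', hle⟩ := ih _ hlt hb rfl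
    exact ⟨b', hb', hle.trans le_self_add⟩

theorem exists_isBasicCover_one_eq_zero_of_not_adj {x y u w : V} (hxy : ¬ G.Adj x y)
    (huw : G.Adj u w) : ∃ a, IsBasicCover G 1 a ∧ a x = 0 ∧ a y = 0 := by
  set s : V → ℕ := fun v => if v = x ∨ v = y then 0 else 1
  have hedge : ∀ i j, G.Adj i j → 1 ≤ s i + s j := by
    intro i j hij
    simp only [s]
    split_ifs with hi hj <;> try omega
    rcases hi with rfl | rfl <;> rcases hj with rfl | rfl
    · exact (G.loopless.irrefl _ hij).elim
    · exact (hxy hij).elim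
    · exact (hxy hij.symm).elim
    · exact (G.loopless.irrefl _ hij).elim
  have hs : IsCover G 1 s := by
    refine ⟨fun h0 => ?_, hedge⟩
    have := hedge u w huw
    simp only [h0, Pi.zero_apply] at this
    omega
  obtain ⟨a, ha, hle⟩ := hs.exists_isBasicCover_le
  exact ⟨a, ha, Nat.eq_zero_of_le_zero (by simpa [s] using hle x),
    Nat.eq_zero_of_le_zero (by simpa [s] using hle y)⟩

end Covers

omit [Fintype V] [DecidableEq V] in
theorem IsCompBipartition.exists_adj_adj_of_mem_left {H : SimpleGraph V}
    {C : H.ConnectedComponent} {A B : Set V} (hb : IsCompBipartition H C A B) {x x' : V}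
    (hx : x ∈ A) (hx' : x' ∈ A)
    (hne : x ≠ x') : ∃ p ∈ B, H.Adj x p ∧ H.Adj x' p := by
  have hsupp : ∀ v ∈ A, v ∈ C.supp := fun v hv => hb.1 ▸ Or.inl hv
  obtain ⟨w⟩ : H.Reachable x x' := SimpleGraph.ConnectedComponent.exact <|
    ((C.mem_supp_iff x).1 (hsupp x hx)).trans ((C.mem_supp_iff x').1 (hsupp x' hx')).symm
  obtain ⟨p, hxp⟩ : ∃ p, H.Adj x p := by
    cases w with
    | nil => exact (hne rfl).elim
    | cons h _ => exact ⟨_, h⟩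
  have hp : p ∈ C.supp := by
    rw [C.mem_supp_iff, ← SimpleGraph.ConnectedComponent.connectedComponentMk_eq_of_adj hxp]
    exact (C.mem_supp_iff x).1 (hsupp x hx)
  have hpB : p ∈ B := by
    rcases (hb.2.2 x (hsupp x hx) p hp).1 hxp with ⟨-, hpB⟩ | ⟨hxB, -⟩
    · exact hpB
    · exact (Set.disjoint_left.1 hb.2.1 hx hxB).elim
  exact ⟨p, hpB, hxp, (hb.2.2 x' (hsupp x' hx') p hp).2 (Or.inl ⟨hx', hpB⟩)⟩

omit [Fintype V] [DecidableEq V] in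
theorem IsCompBipartition.basicCover_eq_of_mem_left {G : SimpleGraph V}
    {C : (ZeroOne G).ConnectedComponent} {A B : Set V} (hb : IsCompBipartition (ZeroOne G) C A B)
    {a : V → ℕ} (ha : IsBasicCover G 1 a) {x x' : V} (hx : x ∈ A) (hx' : x' ∈ A) :
    a x = a x' := by
  obtain rfl | hne := eq_or_ne x x'
  · rfl
  obtain ⟨p, -, hxp, hx'p⟩ := hb.exists_adj_adj_of_mem_left hx hx' hne
  have h₁ := hxp.2 a ha
  have h₂ := hx'p.2 a ha
  omega

theorem edge_between_A_parts_complete_general (G : SimpleGraph V)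
    (C₁ C₂ : (ZeroOne G).ConnectedComponent)
    (A₁ B₁ A₂ B₂ : Set V)
    (hb₁ : IsCompBipartition (ZeroOne G) C₁ A₁ B₁)
    (hb₂ : IsCompBipartition (ZeroOne G) C₂ A₂ B₂)
    (hedge : ∃ x ∈ A₁, ∃ y ∈ A₂, G.Adj x y) :
    ∀ x ∈ A₁, ∀ y ∈ A₂, G.Adj x y := by
  intro x hx y hy
  by_contra hxy
  obtain ⟨x₀, hx₀, y₀, hy₀, hadj⟩ := hedge
  obtain ⟨a, ha, hax, hay⟩ := exists_isBasicCover_one_eq_zero_of_not_adj hxy hadj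
  have hcover := ha.1.2 x₀ y₀ hadj
  rw [← hb₁.basicCover_eq_of_mem_left ha hx hx₀,
    ← hb₂.basicCover_eq_of_mem_left ha hy hy₀] at hcover
  omega

/-- Let `G` be a domain and let `H₁, H₂` be two distinct connected components
of `G^{0-1}` with bipartitions `A₁ ∪ B₁` and `A₂ ∪ B₂`.  If `G` has an edge between `A₁`
and `A₂`, then every vertex of `A₁` is adjacent in `G` to every vertex of `A₂`. -/
theorem edge_between_A_parts_complete (G : SimpleGraph V) (hG : IsGraphDomain G)
    (C₁ C₂ : (ZeroOne G).ConnectedComponent) (hne : C₁ ≠ C₂)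
    (h₁ : C₁.supp ⊆ {v : V | ∃ w, G.Adj v w}) (h₂ : C₂.supp ⊆ {v : V | ∃ w, G.Adj v w})
    (A₁ B₁ A₂ B₂ : Set V)
    (hb₁ : IsCompBipartition (ZeroOne G) C₁ A₁ B₁)
    (hb₂ : IsCompBipartition (ZeroOne G) C₂ A₂ B₂)
    (hedge : ∃ x ∈ A₁, ∃ y ∈ A₂, G.Adj x y) :
    ∀ x ∈ A₁, ∀ y ∈ A₂, G.Adj x y :=
  edge_between_A_parts_complete_general G C₁ C₂ A₁ B₁ A₂ B₂ hb₁ hb₂ hedge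
end

section
/- Let G be a finite simple graph that is a domain, and let H_1 and H_2 be two distinct connected components of G^{0-1}, with vertex bipartitions A_1 ∪ B_1 and A_2 ∪ B_2 respectively. If G contains an edge between some vertex of A_1 and some vertex of A_2, then G contains no edge between a vertex of B_1 and a vertex of B_2. -/
variable {V : Type*} [Fintype V] [DecidableEq V]

/-! If `x₁y₁` and `x₂y₂` are edges of `G^{0-1}` and `x₁x₂`, `y₁y₂` are edges of `G`, then for
every basic `1`-cover `a` the inequalities `a x₁ + a x₂ ≥ 1` and `a y₁ + a y₂ ≥ 1` have left-hand
sides summing to `(a x₁ + a y₁) + (a x₂ + a y₂) = 2`, so both are equalities. Hence `x₁x₂` would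
be an edge of `G^{0-1}`, joining the two distinct components. -/

theorem zeroOne_adj_of_adj_of_adj {W : Type*} {G : SimpleGraph W} {x₁ y₁ x₂ y₂ : W}
    (h₁ : (ZeroOne G).Adj x₁ y₁) (h₂ : (ZeroOne G).Adj x₂ y₂)
    (hx : G.Adj x₁ x₂) (hy : G.Adj y₁ y₂) : (ZeroOne G).Adj x₁ x₂ := by
  refine ⟨hx, fun a ha => ?_⟩
  have hsum₁ := h₁.2 a ha
  have hsum₂ := h₂.2 a ha
  have hcover_x := ha.1.2 x₁ x₂ hx
  have hcover_y := ha.1.2 y₁ y₂ hy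
  omega

namespace IsCompBipartition

variable {W : Type*} {H : SimpleGraph W} {C : H.ConnectedComponent} {A B : Set W}

theorem left_subset_supp (hb : IsCompBipartition H C A B) : A ⊆ C.supp :=
  hb.1 ▸ Set.subset_union_left

theorem right_subset_supp (hb : IsCompBipartition H C A B) : B ⊆ C.supp :=
  hb.1 ▸ Set.subset_union_right

theorem adj_of_mem_of_mem (hb : IsCompBipartition H C A B) {x y : W} (hx : x ∈ A)
    (hy : y ∈ B) : H.Adj x y :=
  (hb.2.2 x (hb.left_subset_supp hx) y (hb.right_subset_supp hy)).mpr (Or.inl ⟨hx, hy⟩)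

end IsCompBipartition

theorem edge_between_A_parts_no_edge_between_B_parts_general (G : SimpleGraph V)
    (C₁ C₂ : (ZeroOne G).ConnectedComponent) (hne : C₁ ≠ C₂)
    (A₁ B₁ A₂ B₂ : Set V)
    (hb₁ : IsCompBipartition (ZeroOne G) C₁ A₁ B₁)
    (hb₂ : IsCompBipartition (ZeroOne G) C₂ A₂ B₂)
    (hedge : ∃ x ∈ A₁, ∃ y ∈ A₂, G.Adj x y) :
    ¬ ∃ x ∈ B₁, ∃ y ∈ B₂, G.Adj x y := by
  rintro ⟨y₁, hy₁, y₂, hy₂, hy⟩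
  obtain ⟨x₁, hx₁, x₂, hx₂, hx⟩ := hedge
  have hadj : (ZeroOne G).Adj x₁ x₂ :=
    zeroOne_adj_of_adj_of_adj (hb₁.adj_of_mem_of_mem hx₁ hy₁) (hb₂.adj_of_mem_of_mem hx₂ hy₂)
      hx hy
  have hx₂C₁ : x₂ ∈ C₁.supp := C₁.mem_supp_of_adj_mem_supp (hb₁.left_subset_supp hx₁) hadj
  exact hne (hx₂C₁.symm.trans (hb₂.left_subset_supp hx₂))

/-- Let `G` be a domain and let `H₁, H₂` be two distinct connected components
of `G^{0-1}` with bipartitions `A₁ ∪ B₁` and `A₂ ∪ B₂`.  If `G` has an edge between `A₁`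
and `A₂`, then `G` has no edge between `B₁` and `B₂`. -/
theorem edge_between_A_parts_no_edge_between_B_parts (G : SimpleGraph V)
    (hG : IsGraphDomain G)
    (C₁ C₂ : (ZeroOne G).ConnectedComponent) (hne : C₁ ≠ C₂)
    (h₁ : C₁.supp ⊆ {v : V | ∃ w, G.Adj v w}) (h₂ : C₂.supp ⊆ {v : V | ∃ w, G.Adj v w})
    (A₁ B₁ A₂ B₂ : Set V)
    (hb₁ : IsCompBipartition (ZeroOne G) C₁ A₁ B₁)
    (hb₂ : IsCompBipartition (ZeroOne G) C₂ A₂ B₂)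
    (hedge : ∃ x ∈ A₁, ∃ y ∈ A₂, G.Adj x y) :
    ¬ ∃ x ∈ B₁, ∃ y ∈ B₂, G.Adj x y :=
  edge_between_A_parts_no_edge_between_B_parts_general G C₁ C₂ hne A₁ B₁ A₂ B₂ hb₁ hb₂ hedge
end

section
/- Let G be a finite simple graph with at least one vertex and no isolated vertices. If G is an unmixed domain, then every connected component of G^{0-1} is a complete bipartite graph K_{a,a} for some integer a ≥ 1; that is, each component has a vertex bipartition A ∪ B with |A| = |B| ≥ 1 whose edges are exactly the pairs {x,y} with x ∈ A and y ∈ B. -/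
variable {V : Type*} [Fintype V] [DecidableEq V]

/-!
Since `G` has no isolated vertices, its basic `1`-covers are exactly the indicators of its
minimal vertex covers, so `{u, w}` is an edge of `G^{0-1}` iff every minimal vertex cover
contains exactly one of `u` and `w`. In a domain the sum of all basic `1`-covers is basic, hence
tight at an edge `{v, w}` through each vertex `v`; since every summand is at least `1` on that
edge, each basic `1`-cover takes the value `1` on it, so `w` is a neighbour of `v` in `G^{0-1}`.

Fix a vertex `x`. Let `A` be the set of vertices lying in exactly the same minimal vertex covers
as `x`, and `B` those lying in exactly the others. The component of `x` in `G^{0-1}` is `A ∪ B`,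
and it is complete bipartite between `A` and `B`. A minimal vertex cover can be pushed towards
any nonempty family of minimal vertex covers by dropping its vertices outside the union of the
family and adding the intersection of the family. Pushing a cover avoiding `x` towards the covers
containing `x`, and the result back towards the covers avoiding `x`, trades `A` for `B` in the
second step, so unmixedness gives `|A| = |B|`.
-/

open Finset

section MinimalVertexCover

omit [DecidableEq V]

variable {G : SimpleGraph V}

def IsMinimalVertexCover (G : SimpleGraph V) (M : Finset V) : Prop :=
  Minimal (fun s : Finset V ↦ G.IsVertexCover s) M

omit [Fintype V] in
theorem isMinimalVertexCover_iff {M : Finset V} :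
    IsMinimalVertexCover G M ↔
      G.IsVertexCover (M : Set V) ∧ ∀ v ∈ M, ∃ w, G.Adj v w ∧ w ∉ M := by
  classical
  refine ⟨fun hM ↦ ⟨hM.prop, fun v hv ↦ ?_⟩, fun ⟨hcov, hpriv⟩ ↦ ⟨hcov, fun N hN hNM v hv ↦ ?_⟩⟩
  · by_contra! hnbrs
    have hcov' : G.IsVertexCover ((M.erase v : Finset V) : Set V) := by
      intro a b hab
      simp only [coe_erase, Set.mem_sdiff, mem_coe, Set.mem_singleton_iff]
      rcases hM.prop hab with ha | hb
      · by_cases hav : a = v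
        · subst hav; exact .inr ⟨hnbrs b hab, hab.ne'⟩
        · exact .inl ⟨ha, hav⟩
      · by_cases hbv : b = v
        · subst hbv; exact .inl ⟨hnbrs a hab.symm, hab.ne⟩
        · exact .inr ⟨hb, hbv⟩
    exact notMem_erase v M (hM.2 hcov' (erase_subset v M) hv)
  · obtain ⟨w, hvw, hwM⟩ := hpriv v hv
    exact (hN hvw).resolve_right fun hwN ↦ hwM (hNM hwN)

omit [Fintype V] in
theorem IsMinimalVertexCover.mem_or_mem {M : Finset V} (hM : IsMinimalVertexCover G M)
    {u w : V} (huw : G.Adj u w) : u ∈ M ∨ w ∈ M :=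
  hM.prop huw

omit [Fintype V] in
theorem IsMinimalVertexCover.nonempty [Nonempty V] (hiso : ∀ v : V, ∃ w, G.Adj v w)
    {M : Finset V} (hM : IsMinimalVertexCover G M) : M.Nonempty := by
  obtain ⟨w, hvw⟩ := hiso (Classical.arbitrary V)
  exact (hM.mem_or_mem hvw).elim (⟨_, ·⟩) (⟨_, ·⟩)

theorem exists_isMinimalVertexCover_disjoint {I : Set V} (hI : G.IsIndepSet I) :
    ∃ M, IsMinimalVertexCover G M ∧ ∀ v ∈ I, v ∉ M := by
  classical
  have hcov : G.IsVertexCover ((univ.filter (· ∉ I) : Finset V) : Set V) := by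
    rw [coe_filter_univ]
    exact SimpleGraph.isVertexCover_compl.2 hI
  obtain ⟨M, hMI, hM⟩ :=
    exists_minimal_le_of_wellFoundedLT (fun s : Finset V ↦ G.IsVertexCover s) _ hcov
  exact ⟨M, hM, fun v hvI hvM ↦ (mem_filter.1 (hMI hvM)).2 hvI⟩

theorem exists_isMinimalVertexCover_notMem (v : V) :
    ∃ M, IsMinimalVertexCover G M ∧ v ∉ M := by
  obtain ⟨M, hM, hvM⟩ := exists_isMinimalVertexCover_disjoint (G := G) (I := {v}) (by simp)
  exact ⟨M, hM, hvM v rfl⟩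

theorem exists_isMinimalVertexCover_mem (hiso : ∀ v : V, ∃ w, G.Adj v w) (v : V) :
    ∃ M, IsMinimalVertexCover G M ∧ v ∈ M := by
  obtain ⟨w, hvw⟩ := hiso v
  obtain ⟨M, hM, hwM⟩ := exists_isMinimalVertexCover_notMem (G := G) w
  exact ⟨M, hM, (hM.mem_or_mem hvw).resolve_right hwM⟩

end MinimalVertexCover

section Sides

omit [DecidableEq V]

variable {G : SimpleGraph V}

def SameSide (G : SimpleGraph V) (u v : V) : Prop :=
  ∀ M, IsMinimalVertexCover G M → (u ∈ M ↔ v ∈ M)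

def OppositeSides (G : SimpleGraph V) (u v : V) : Prop :=
  ∀ M, IsMinimalVertexCover G M → (u ∈ M ↔ v ∉ M)

section

omit [Fintype V]

theorem SameSide.refl (u : V) : SameSide G u u := fun _ _ ↦ Iff.rfl

theorem SameSide.symm {u v : V} (h : SameSide G u v) : SameSide G v u :=
  fun M hM ↦ (h M hM).symm

theorem SameSide.trans {u v w : V} (h : SameSide G u v) (h' : SameSide G v w) :
    SameSide G u w :=
  fun M hM ↦ (h M hM).trans (h' M hM)

theorem OppositeSides.symm {u v : V} (h : OppositeSides G u v) : OppositeSides G v u :=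
  fun M hM ↦ by have := h M hM; tauto

theorem SameSide.trans_oppositeSides {u v w : V} (h : SameSide G u v)
    (h' : OppositeSides G v w) : OppositeSides G u w :=
  fun M hM ↦ (h M hM).trans (h' M hM)

theorem OppositeSides.trans_sameSide {u v w : V} (h : OppositeSides G u v)
    (h' : SameSide G v w) : OppositeSides G u w :=
  fun M hM ↦ by have := h M hM; have := h' M hM; tauto

theorem OppositeSides.trans {u v w : V} (h : OppositeSides G u v) (h' : OppositeSides G v w) :
    SameSide G u w :=
  fun M hM ↦ by have := h M hM; have := h' M hM; tauto

end

theorem SameSide.not_oppositeSides {u v : V} (h : SameSide G u v) : ¬ OppositeSides G u v := by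
  intro h'
  obtain ⟨M, hM, -⟩ := exists_isMinimalVertexCover_notMem (G := G) u
  have := h M hM
  have := h' M hM
  tauto

theorem SameSide.not_adj {u w : V} (h : SameSide G u w) : ¬ G.Adj u w := by
  intro huw
  obtain ⟨M, hM, huM⟩ := exists_isMinimalVertexCover_notMem (G := G) u
  exact (hM.mem_or_mem huw).elim huM fun hwM ↦ huM ((h M hM).2 hwM)

theorem OppositeSides.adj {u w : V} (h : OppositeSides G u w) : G.Adj u w := by
  by_contra huw
  obtain ⟨M, hM, hM'⟩ := exists_isMinimalVertexCover_disjoint (G := G) (I := {u, w})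
    ((G.isIndepSet_iff).2 (Set.pairwise_pair.2 fun _ ↦ ⟨huw, fun h ↦ huw h.symm⟩))
  exact hM' u (by simp) ((h M hM).2 (hM' w (by simp)))

theorem oppositeSides_iff_of_sides {x a b : V} (ha : SameSide G x a ∨ OppositeSides G x a)
    (hb : SameSide G x b ∨ OppositeSides G x b) :
    OppositeSides G a b ↔
      SameSide G x a ∧ OppositeSides G x b ∨ OppositeSides G x a ∧ SameSide G x b := by
  rcases ha with ha | ha <;> rcases hb with hb | hb
  · refine iff_of_false (ha.symm.trans hb).not_oppositeSides ?_
    rintro (⟨-, h⟩ | ⟨h, -⟩)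
    exacts [hb.not_oppositeSides h, ha.not_oppositeSides h]
  · exact iff_of_true (ha.symm.trans_oppositeSides hb) (.inl ⟨ha, hb⟩)
  · exact iff_of_true (ha.symm.trans_sameSide hb) (.inr ⟨ha, hb⟩)
  · refine iff_of_false (ha.symm.trans hb).not_oppositeSides ?_
    rintro (⟨h, -⟩ | ⟨-, h⟩)
    exacts [h.not_oppositeSides ha, h.not_oppositeSides hb]

end Sides

section BasicCover

variable {G : SimpleGraph V}

omit [Fintype V] in
theorem indicator_add_indicator_eq_one_iff {M : Finset V} {u w : V} :
    (M : Set V).indicator 1 u + (M : Set V).indicator 1 w = (1 : ℕ) ↔ (u ∈ M ↔ w ∉ M) := by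
  by_cases hu : u ∈ M <;> by_cases hw : w ∈ M <;> simp [hu, hw]

omit [Fintype V] in
theorem one_le_indicator_add_indicator {M : Finset V} (hM : IsMinimalVertexCover G M)
    {u w : V} (huw : G.Adj u w) : 1 ≤ (M : Set V).indicator 1 u + (M : Set V).indicator 1 w := by
  rcases hM.mem_or_mem huw with h | h <;> simp [Set.indicator_apply, h]

omit [Fintype V] in
theorem IsBasicCover.exists_adj_add_le {k : ℕ} {a : V → ℕ} (h : IsBasicCover G k a)
    (hk : 1 ≤ k) {v : V} (hv : a v ≠ 0) (hnbr : ∃ w, G.Adj v w) :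
    ∃ w, G.Adj v w ∧ a v + a w ≤ k := by
  by_contra! hslack
  obtain ⟨w, hvw⟩ := hnbr
  have hw := hslack w hvw
  -- with slack on every edge at `v`, lowering `a v` by one leaves a `k`-cover
  refine h.2 ⟨Function.update a v (a v - 1), Pi.single v 1, ⟨?_, fun i j hij ↦ ?_⟩,
    ⟨by simp, fun _ _ _ ↦ Nat.zero_le _⟩, ?_⟩
  · intro h0
    have h0v := congrFun h0 v
    have h0w := congrFun h0 w
    simp only [Function.update_self, Function.update_of_ne hvw.ne', Pi.zero_apply] at h0v h0w
    omega
  · have hij' := h.1.2 i j hij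
    rcases eq_or_ne i v with rfl | hi
    · have := hslack j hij
      simp only [Function.update_self, Function.update_of_ne hij.ne']
      omega
    rcases eq_or_ne j v with rfl | hj
    · have := hslack i hij.symm
      simp only [Function.update_self, Function.update_of_ne hi]
      omega
    simpa only [Function.update_of_ne hi, Function.update_of_ne hj] using hij'
  · ext u
    rcases eq_or_ne u v with rfl | hu
    · simp only [Pi.add_apply, Function.update_self, Pi.single_eq_same]
      omega
    · simp [Function.update_of_ne hu, Pi.single_eq_of_ne hu]

omit [Fintype V] in
theorem IsBasicCover.le_one (hiso : ∀ v : V, ∃ w, G.Adj v w) {a : V → ℕ}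
    (h : IsBasicCover G 1 a) (v : V) : a v ≤ 1 := by
  by_contra! hv
  obtain ⟨w, -, hle⟩ := h.exists_adj_add_le le_rfl (by omega) (hiso v)
  omega

theorem isBasicCover_indicator [Nonempty V] (hiso : ∀ v : V, ∃ w, G.Adj v w) {M : Finset V}
    (hM : IsMinimalVertexCover G M) : IsBasicCover G 1 ((M : Set V).indicator 1) := by
  obtain ⟨v₀, hv₀⟩ := hM.nonempty hiso
  refine ⟨⟨fun h0 ↦ by simpa [hv₀] using congrFun h0 v₀,
    fun _ _ ↦ one_le_indicator_add_indicator hM⟩, ?_⟩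
  rintro ⟨b, c, hb, hc, hbc⟩
  obtain ⟨v, hcv⟩ : ∃ v, c v ≠ 0 := by
    by_contra! hc0
    exact hc.1 (funext hc0)
  have hv := congrFun hbc v
  have hvM : v ∈ M := by
    by_contra hvM
    simp only [Set.indicator_of_notMem (mem_coe.not.2 hvM), Pi.add_apply] at hv
    omega
  obtain ⟨w, hvw, hwM⟩ := (isMinimalVertexCover_iff.1 hM).2 v hvM
  have hw := congrFun hbc w
  simp only [Set.indicator_of_mem (mem_coe.2 hvM), Set.indicator_of_notMem (mem_coe.not.2 hwM),
    Pi.add_apply, Pi.one_apply] at hv hw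
  have := hb.2 v w hvw
  omega

theorem IsBasicCover.exists_eq_indicator (hiso : ∀ v : V, ∃ w, G.Adj v w) {a : V → ℕ}
    (h : IsBasicCover G 1 a) :
    ∃ M, IsMinimalVertexCover G M ∧ a = (M : Set V).indicator 1 := by
  have ha : ∀ v, a v = 0 ∨ a v = 1 := fun v ↦ by have := h.le_one hiso v; omega
  refine ⟨univ.filter (a · ≠ 0), isMinimalVertexCover_iff.2 ⟨fun u w huw ↦ ?_, fun v hv ↦ ?_⟩,
    funext fun v ↦ ?_⟩
  · have := h.1.2 u w huw
    simp only [coe_filter, mem_univ, true_and, Set.mem_ofPred_eq]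
    omega
  · have hav := (mem_filter.1 hv).2
    obtain ⟨w, hvw, hle⟩ := h.exists_adj_add_le le_rfl hav (hiso v)
    exact ⟨w, hvw, by simp only [mem_filter, mem_univ, true_and, not_not]; omega⟩
  · rcases ha v with hv | hv <;> simp [hv]

theorem isBasicCover_one_iff [Nonempty V] (hiso : ∀ v : V, ∃ w, G.Adj v w) {a : V → ℕ} :
    IsBasicCover G 1 a ↔ ∃ M, IsMinimalVertexCover G M ∧ a = (M : Set V).indicator 1 :=
  ⟨IsBasicCover.exists_eq_indicator hiso, fun ⟨_, hM, ha⟩ ↦ ha ▸ isBasicCover_indicator hiso hM⟩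

theorem IsUnmixed.card_eq [Nonempty V] (hiso : ∀ v : V, ∃ w, G.Adj v w) (hu : IsUnmixed G)
    {M N : Finset V} (hM : IsMinimalVertexCover G M) (hN : IsMinimalVertexCover G N) :
    #M = #N := by
  simpa [Set.indicator_apply] using
    hu _ _ (isBasicCover_indicator hiso hM) (isBasicCover_indicator hiso hN)

theorem zeroOne_adj_iff [Nonempty V] (hiso : ∀ v : V, ∃ w, G.Adj v w) {u w : V} :
    (ZeroOne G).Adj u w ↔ OppositeSides G u w := by
  refine ⟨fun ⟨_, h⟩ M hM ↦ ?_, fun h ↦ ⟨h.adj, fun a ha ↦ ?_⟩⟩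
  · exact indicator_add_indicator_eq_one_iff.1 (h _ (isBasicCover_indicator hiso hM))
  · obtain ⟨M, hM, rfl⟩ := (isBasicCover_one_iff hiso).1 ha
    exact indicator_add_indicator_eq_one_iff.2 (h M hM)

omit [Fintype V] [DecidableEq V] in
theorem IsGraphDomain.isBasicCover_sum (hd : IsGraphDomain G) {ι : Type*} (s : Finset ι)
    (hs : s.Nonempty) (f : ι → V → ℕ) (hf : ∀ i ∈ s, IsBasicCover G 1 (f i)) :
    IsBasicCover G #s (∑ i ∈ s, f i) := by
  have := hd #s 0 (by simpa using hs.card_pos) (fun p ↦ f (s.equivFin.symm p)) Fin.elim0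
    (fun p ↦ hf _ (s.equivFin.symm p).2) (fun q ↦ q.elim0)
  rwa [Equiv.sum_comp s.equivFin.symm (fun i ↦ f i), sum_coe_sort, Finset.univ_eq_empty,
    sum_empty, add_zero, mul_zero, add_zero] at this

theorem IsGraphDomain.exists_oppositeSides [Nonempty V] (hiso : ∀ v : V, ∃ w, G.Adj v w)
    (hd : IsGraphDomain G) (v : V) : ∃ w, OppositeSides G v w := by
  classical
  set 𝒞 := univ.filter (IsMinimalVertexCover G)
  have h𝒞 : ∀ {M}, M ∈ 𝒞 ↔ IsMinimalVertexCover G M := by simp [𝒞]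
  obtain ⟨Mv, hMv, hvMv⟩ := exists_isMinimalVertexCover_mem hiso v
  have hbasic := hd.isBasicCover_sum 𝒞 ⟨Mv, h𝒞.2 hMv⟩ (fun M ↦ (M : Set V).indicator 1)
    fun M hM ↦ isBasicCover_indicator hiso (h𝒞.1 hM)
  have hv : (∑ M ∈ 𝒞, (M : Set V).indicator 1) v ≠ 0 := by
    rw [Finset.sum_apply]
    exact (sum_pos' (fun _ _ ↦ Nat.zero_le _) ⟨Mv, h𝒞.2 hMv, by simp [hvMv]⟩).ne'
  obtain ⟨w, hvw, hle⟩ := hbasic.exists_adj_add_le (card_pos.2 ⟨Mv, h𝒞.2 hMv⟩) hv (hiso v)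
  rw [Finset.sum_apply, Finset.sum_apply, ← sum_add_distrib, card_eq_sum_ones] at hle
  have hone : ∀ M ∈ 𝒞, 1 ≤ (M : Set V).indicator 1 v + (M : Set V).indicator 1 w :=
    fun M hM ↦ one_le_indicator_add_indicator (h𝒞.1 hM) hvw
  have htight := (sum_eq_sum_iff_of_le hone).1 (le_antisymm (sum_le_sum hone) hle)
  exact ⟨w, fun M hM ↦ indicator_add_indicator_eq_one_iff.1 (htight M (h𝒞.2 hM)).symm⟩

end BasicCover

section Components

variable {G : SimpleGraph V} [Nonempty V]

/-- If `y` and `z` were in different components of `G^{0-1}`, the vertices of the component of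
`y` on the side of `y` together with those of the component of `z` on the side of `z` would
form an independent set; a minimal vertex cover avoiding it contains neither `y` nor `z`. -/
theorem OppositeSides.reachable (hiso : ∀ v : V, ∃ w, G.Adj v w) {y z : V}
    (h : OppositeSides G y z) : (ZeroOne G).Reachable y z := by
  by_contra hyz
  have hcross : ∀ {u w}, (ZeroOne G).Reachable y u → SameSide G y u →
      (ZeroOne G).Reachable z w → SameSide G z w → ¬ G.Adj u w := fun hyu hsu hzw hsw huw ↦
    hyz <| (hyu.trans ((zeroOne_adj_iff hiso).2
      (hsu.symm.trans_oppositeSides (h.trans_sameSide hsw))).reachable).trans hzw.symm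
  have hS : G.IsIndepSet ({u | (ZeroOne G).Reachable y u ∧ SameSide G y u} ∪
      {u | (ZeroOne G).Reachable z u ∧ SameSide G z u}) := by
    rintro u (⟨hyu, hsu⟩ | ⟨hzu, hsu⟩) w (⟨hyw, hsw⟩ | ⟨hzw, hsw⟩) - huw
    · exact (hsu.symm.trans hsw).not_adj huw
    · exact hcross hyu hsu hzw hsw huw
    · exact hcross hyw hsw hzu hsu huw.symm
    · exact (hsu.symm.trans hsw).not_adj huw
  obtain ⟨M, hM, hSM⟩ := exists_isMinimalVertexCover_disjoint hS
  exact hSM y (.inl ⟨.refl y, .refl y⟩) ((h M hM).2 (hSM z (.inr ⟨.refl z, .refl z⟩)))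

theorem SameSide.reachable (hiso : ∀ v : V, ∃ w, G.Adj v w)
    (hpartner : ∀ v, ∃ w, OppositeSides G v w) {x v : V} (h : SameSide G x v) :
    (ZeroOne G).Reachable x v := by
  obtain ⟨w, hxw⟩ := hpartner x
  exact ((zeroOne_adj_iff hiso).2 hxw).reachable.trans
    ((hxw.symm.trans_sameSide h).reachable hiso)

theorem reachable_zeroOne_iff (hiso : ∀ v : V, ∃ w, G.Adj v w)
    (hpartner : ∀ v, ∃ w, OppositeSides G v w) {x v : V} :
    (ZeroOne G).Reachable x v ↔ SameSide G x v ∨ OppositeSides G x v := by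
  refine ⟨fun hxv ↦ ?_, fun h ↦ h.elim (·.reachable hiso hpartner) (·.reachable hiso)⟩
  obtain ⟨p⟩ := hxv
  induction p with
  | nil => exact .inl (.refl _)
  | cons huv _ ih =>
    have huv := (zeroOne_adj_iff hiso).1 huv
    exact ih.elim (.inr <| huv.trans_sameSide ·) (.inl <| huv.trans ·)

theorem isCompBipartition_sides (hiso : ∀ v : V, ∃ w, G.Adj v w)
    (hpartner : ∀ v, ∃ w, OppositeSides G v w) (x : V) :
    IsCompBipartition (ZeroOne G) ((ZeroOne G).connectedComponentMk x)
      {v | SameSide G x v} {v | OppositeSides G x v} := by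
  have hsupp : ((ZeroOne G).connectedComponentMk x).supp =
      {v | SameSide G x v} ∪ {v | OppositeSides G x v} := by
    ext v
    rw [SimpleGraph.ConnectedComponent.mem_supp_iff, SimpleGraph.ConnectedComponent.eq,
      SimpleGraph.reachable_comm, reachable_zeroOne_iff hiso hpartner]
    rfl
  refine ⟨hsupp.symm, Set.disjoint_left.2 fun v hv ↦ hv.not_oppositeSides, ?_⟩
  rw [hsupp]
  intro a ha b hb
  rw [zeroOne_adj_iff hiso]
  exact oppositeSides_iff_of_sides ha hb

end Components

theorem Finset.card_sdiff_eq_card_sdiff_of_card_inter_union_eq {α : Type*} [DecidableEq α]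
    {M U I : Finset α} (hIU : I ⊆ U) (h : #(M ∩ U ∪ I) = #M) : #(M \ U) = #(I \ M) := by
  have hsplit : I \ (M ∩ U) = I \ M := by
    ext v
    have := @hIU v
    simp only [mem_sdiff, mem_inter]
    tauto
  have := card_sdiff_add_card I (M ∩ U)
  rw [hsplit, union_comm] at this
  have := card_inter_add_card_sdiff M U
  omega

section Cardinality

variable {G : SimpleGraph V}

theorem IsMinimalVertexCover.inter_sup_union_inf' (hpartner : ∀ v, ∃ w, OppositeSides G v w)
    {𝓕 : Finset (Finset V)} (hne : 𝓕.Nonempty) (h𝓕 : ∀ M ∈ 𝓕, IsMinimalVertexCover G M)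
    {D : Finset V} (hD : IsMinimalVertexCover G D) :
    IsMinimalVertexCover G (D ∩ 𝓕.sup id ∪ 𝓕.inf' hne id) := by
  refine isMinimalVertexCover_iff.2 ⟨fun u w huw ↦ ?_, fun v hv ↦ ?_⟩
  · simp only [coe_union, coe_inter, Set.mem_union, Set.mem_inter_iff, mem_coe, mem_sup,
      id_eq, mem_inf']
    by_cases hu : ∃ M ∈ 𝓕, u ∈ M
    · by_cases hw : ∃ M ∈ 𝓕, w ∈ M
      · exact (hD.mem_or_mem huw).imp (fun h ↦ .inl ⟨h, hu⟩) (fun h ↦ .inl ⟨h, hw⟩)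
      · push Not at hw
        exact .inl (.inr fun M hM ↦ ((h𝓕 M hM).mem_or_mem huw).resolve_right (hw M hM))
    · push Not at hu
      exact .inr (.inr fun M hM ↦ ((h𝓕 M hM).mem_or_mem huw).resolve_left (hu M hM))
  · obtain ⟨w, hvw⟩ := hpartner v
    refine ⟨w, hvw.adj, ?_⟩
    simp only [mem_union, mem_inter, mem_sup, id_eq, mem_inf'] at hv ⊢
    obtain ⟨M₀, hM₀⟩ := hne
    rcases hv with ⟨hvD, M, hM, hvM⟩ | hv
    · exact not_or.2 ⟨fun h ↦ (hvw D hD).1 hvD h.1,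
        fun h ↦ (hvw M (h𝓕 M hM)).1 hvM (h M hM)⟩
    · have hw : ∀ M ∈ 𝓕, w ∉ M := fun M hM ↦ (hvw M (h𝓕 M hM)).1 (hv M hM)
      exact not_or.2 ⟨fun ⟨_, M, hM, hwM⟩ ↦ hw M hM hwM, fun h ↦ hw M₀ hM₀ (h M₀ hM₀)⟩

theorem ncard_setOf_sameSide_eq [Nonempty V] (hiso : ∀ v : V, ∃ w, G.Adj v w)
    (hu : IsUnmixed G) (hpartner : ∀ v, ∃ w, OppositeSides G v w) (x : V) :
    {v | SameSide G x v}.ncard = {v | OppositeSides G x v}.ncard := by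
  classical
  set 𝓕 := univ.filter fun M ↦ IsMinimalVertexCover G M ∧ x ∈ M
  set 𝓖 := univ.filter fun M ↦ IsMinimalVertexCover G M ∧ x ∉ M
  have mem𝓕 : ∀ {M}, M ∈ 𝓕 ↔ IsMinimalVertexCover G M ∧ x ∈ M := by simp [𝓕]
  have mem𝓖 : ∀ {M}, M ∈ 𝓖 ↔ IsMinimalVertexCover G M ∧ x ∉ M := by simp [𝓖]
  obtain ⟨p, hp, hxp⟩ := exists_isMinimalVertexCover_mem hiso x
  obtain ⟨q, hq, hxq⟩ := exists_isMinimalVertexCover_notMem (G := G) x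
  have h𝓕 : 𝓕.Nonempty := ⟨p, mem𝓕.2 ⟨hp, hxp⟩⟩
  have h𝓖 : 𝓖.Nonempty := ⟨q, mem𝓖.2 ⟨hq, hxq⟩⟩
  set M := q ∩ 𝓕.sup id ∪ 𝓕.inf' h𝓕 id
  have hM := hq.inter_sup_union_inf' hpartner h𝓕 fun _ h ↦ (mem𝓕.1 h).1
  have hN := hM.inter_sup_union_inf' hpartner h𝓖 fun _ h ↦ (mem𝓖.1 h).1
  have hcard := card_sdiff_eq_card_sdiff_of_card_inter_union_eq
    ((inf'_le _ (b := q) (mem𝓖.2 ⟨hq, hxq⟩)).trans (le_sup (f := id) (mem𝓖.2 ⟨hq, hxq⟩)))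
    (hu.card_eq hiso hN hM)
  -- `⋂ 𝓖 ⊆ q ⊆ ⋃ 𝓖`, so the second push removes `⋂ 𝓕 \ ⋃ 𝓖` and adds `⋂ 𝓖 \ ⋃ 𝓕`
  have hside : ((M \ 𝓖.sup id : Finset V) : Set V) = {v | SameSide G x v} := by
    ext v
    simp only [coe_sdiff, Set.mem_sdiff, mem_coe, M, mem_union, mem_inter, mem_sup, mem_inf',
      id_eq, mem𝓕, mem𝓖, Set.mem_ofPred_eq, SameSide]
    grind
  have hopp : ((𝓖.inf' h𝓖 id \ M : Finset V) : Set V) = {v | OppositeSides G x v} := by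
    ext v
    simp only [coe_sdiff, Set.mem_sdiff, mem_coe, M, mem_union, mem_inter, mem_sup, mem_inf',
      id_eq, mem𝓕, mem𝓖, Set.mem_ofPred_eq, OppositeSides]
    grind
  rw [← hside, ← hopp, Set.ncard_coe_finset, Set.ncard_coe_finset]
  exact hcard

end Cardinality

/-- Let `G` have at least one vertex and no isolated vertices.  If `G` is an
unmixed domain, then every connected component of `G^{0-1}` is a complete bipartite graph
`K_{a,a}` for some `a ≥ 1`: it has a vertex bipartition `A ∪ B` with `|A| = |B| ≥ 1` whose
edges are exactly the pairs `{x, y}` with `x ∈ A`, `y ∈ B`. -/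
theorem unmixed_domain_components_are_Kaa [Nonempty V] (G : SimpleGraph V)
    (hiso : ∀ v : V, ∃ w, G.Adj v w)
    (hu : IsUnmixed G) (hd : IsGraphDomain G) :
    ∀ C : (ZeroOne G).ConnectedComponent, ∃ A B : Set V,
      IsCompBipartition (ZeroOne G) C A B ∧ A.Nonempty ∧ A.ncard = B.ncard := by
  have hpartner := hd.exists_oppositeSides hiso
  intro C
  induction C using SimpleGraph.ConnectedComponent.ind with
  | h x =>
    exact ⟨{v | SameSide G x v}, {v | OppositeSides G x v},
      isCompBipartition_sides hiso hpartner x, ⟨x, .refl x⟩,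
      ncard_setOf_sameSide_eq hiso hu hpartner x⟩
end
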